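/- Let d ≥ 2 and r_1, …, r_d ∈ ℕ. Let a_{11}, …, a_{dd} be positive reals and let a_{ij} = a_{ji} ∈ ℝ for 1 ≤ i ≠ j ≤ d. Let C be the d×d real symmetric matrix with diagonal entries C_{ii} = a_{ii} and off-diagonal entries C_{ij} = −a_{ij}, and let g(x) = exp(−xᵀCx) for x ∈ ℝ^d. For k = (k_1, …, k_{d−1}) ∈ ℕ^{d−1} with 0 ≤ k_i ≤ r_{i+1} for each i, define the nested polynomial P_k(x) = H_{r_d−k_{d−1}}(S_d(x)) · ∂_d^{k_{d−1}}[ H_{r_{d−1}−k_{d−2}}(S_{d−1}(x)) · ∂_{d−1}^{k_{d−2}}[ ⋯ H_{r_2−k_1}(S_2(x)) · ∂_2^{k_1} H_{r_1}(S_1(x)) ⋯ ] ], where ∂_j^m denotes the m-th partial derivative in the variable x_j. Then for all x ∈ ℝ^d: (A_d*)^{r_d} ⋯ (A_2*)^{r_2} (A_1*)^{r_1} g (x) = (∏_{i=1}^d (1+a_{ii})^{r_i/2}) · Σ_k ( ∏_{i=1}^{d−1} (−1)^{k_i} (1+a_{i+1,i+1})^{−k_i/2} · C(r_{i+1}, k_i)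 ) · P_k(x) · exp(−xᵀCx), where the sum is over all k = (k_1,…,k_{d−1}) ∈ ℕ^{d−1} with 0 ≤ k_i ≤ r_{i+1}, and C(n,k) denotes the binomial coefficient. -/

import Mathlib

/-- The physicists' Hermite polynomial `H_n(x) = (-1)^n e^{x^2} (d^n/dx^n) e^{-x^2}`. -/
noncomputable def Hpoly (n : ℕ) (x : ℝ) : ℝ :=
  (-1 : ℝ) ^ n * Real.exp (x ^ 2) * iteratedDeriv n (fun y => Real.exp (-(y ^ 2))) x

/-- Partial derivative in the `j`-th variable of a function of countably many real
variables (only the first `d` are relevant). -/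
noncomputable def pd (j : ℕ) (f : (ℕ → ℝ) → ℝ) : (ℕ → ℝ) → ℝ :=
  fun x => deriv (fun t => f (Function.update x j t)) (x j)

/-- The creation operator `A_j* f = -∂f/∂x_j + 2 x_j f`. -/
noncomputable def creation (j : ℕ) (f : (ℕ → ℝ) → ℝ) : (ℕ → ℝ) → ℝ :=
  fun x => -(pd j f x) + 2 * x j * f x

/-- `creationChain r n f = (A_{n-1}*)^{r_{n-1}} ⋯ (A_1*)^{r_1} (A_0*)^{r_0} f`
(applying first the creation operator in variable `0`, then in variable `1`, etc.;
indices are `0`-based). -/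
noncomputable def creationChain (r : ℕ → ℕ) : ℕ → ((ℕ → ℝ) → ℝ) → ((ℕ → ℝ) → ℝ)
  | 0, f => f
  | (n + 1), f => (creation n)^[r n] (creationChain r n f)

/-- The quadratic form `xᵀCx` where `C` has diagonal entries `a i i` and off-diagonal
entries `-(a i j)` (indices `0, …, d-1`). -/
noncomputable def Qform (d : ℕ) (a : ℕ → ℕ → ℝ) (x : ℕ → ℝ) : ℝ :=
  ∑ i ∈ Finset.range d, ∑ j ∈ Finset.range d,
    x i * (if i = j then a i i else -(a i j)) * x j

/-- `S_i(x) = ((1+a_{ii}) x_i - ∑_{j ≠ i} a_{ij} x_j) / √(1+a_{ii})` (indices `0`-based,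
with `j` ranging over `{0, …, d-1} \ {i}`). -/
noncomputable def Sfun (d : ℕ) (a : ℕ → ℕ → ℝ) (i : ℕ) (x : ℕ → ℝ) : ℝ :=
  ((1 + a i i) * x i -
      ∑ j ∈ (Finset.range d).filter (fun j => j ≠ i), a i j * x j) /
    Real.sqrt (1 + a i i)

/-- The nested polynomial
`P_k = H_{r_{d-1}-k_{d-2}}(S_{d-1}(x)) ∂_{d-1}^{k_{d-2}}[ ⋯ H_{r_1-k_0}(S_1(x)) ∂_1^{k_0} H_{r_0}(S_0(x)) ⋯ ]`
(`0`-based indices); the value `Pnest d a r k ℓ` is the nesting up to level `ℓ`. -/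
noncomputable def Pnest (d : ℕ) (a : ℕ → ℕ → ℝ) (r k : ℕ → ℕ) : ℕ → (ℕ → ℝ) → ℝ
  | 0 => fun x => Hpoly (r 0) (Sfun d a 0 x)
  | (i + 1) => fun x =>
      Hpoly (r (i + 1) - k i) (Sfun d a (i + 1) x) *
        ((pd (i + 1))^[k i] (Pnest d a r k i)) x

/-- Extension of a tuple `k : Fin (d-1) → ℕ` to a function `ℕ → ℕ` (by `0`). -/
def ext (d : ℕ) (k : Fin (d - 1) → ℕ) (n : ℕ) : ℕ :=
  if h : n < d - 1 then k ⟨n, h⟩ else 0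

/-!
Write `g = exp (-xᵀCx)` and `c_j = 1 + a_jj`. Since `∂_j S_j = √c_j` and
`∂_j g = 2 (x_j - √c_j S_j) g`, the Hermite recursion `H_{n+1}(s) = 2 s H_n(s) - H_n'(s)` gives
`A_j* (P · H_n(S_j) · g) = √c_j · P · H_{n+1}(S_j) · g - ∂_j P · H_n(S_j) · g`.
The two terms act like the commuting operators `√c_j R` (raise the Hermite index) and `-∂_j`, so
`(A_j*)^n (P g) = ∑_k C(n,k) (-1)^k c_j^{(n-k)/2} ∂_j^k P · H_{n-k}(S_j) · g`.
Applying this for `j = 0, …, d-1` in turn, with `P` the polynomial built at the previous level,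
produces the nested polynomials `P_k`.
-/

open scoped ContDiff

section

open Finset Function

theorem contDiff_Hpoly (n : ℕ) : ContDiff ℝ ∞ (Hpoly n) := by
  have hg : ContDiff ℝ ∞ (fun y : ℝ => Real.exp (-(y ^ 2))) := by fun_prop
  unfold Hpoly
  rw [iteratedDeriv_eq_iterate]
  exact (contDiff_const.mul (by fun_prop)).mul (hg.iterate_deriv n)

theorem Hpoly_zero (x : ℝ) : Hpoly 0 x = 1 := by
  simp [Hpoly, ← Real.exp_add]

theorem hasDerivAt_Hpoly (n : ℕ) (x : ℝ) :
    HasDerivAt (Hpoly n) (2 * x * Hpoly n x - Hpoly (n + 1) x) x := by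
  have hg : ContDiff ℝ ∞ (fun y : ℝ => Real.exp (-(y ^ 2))) := by fun_prop
  have hD : HasDerivAt (iteratedDeriv n fun y => Real.exp (-(y ^ 2)))
      (iteratedDeriv (n + 1) (fun y => Real.exp (-(y ^ 2))) x) x := by
    rw [iteratedDeriv_succ]
    exact ((hg.differentiable_iteratedDeriv n (by exact_mod_cast WithTop.coe_lt_top _))
      x).hasDerivAt
  have hE : HasDerivAt (fun y : ℝ => Real.exp (y ^ 2)) (Real.exp (x ^ 2) * (2 * x)) x := by
    simpa using (hasDerivAt_pow 2 x).exp
  refine ((hE.const_mul ((-1 : ℝ) ^ n)).fun_mul hD).congr_deriv ?_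
  simp only [Hpoly, pow_succ]
  ring

-- The coefficient form of `(s R - D)^(n+1) = (s R - D)^n (s R - D)` for commuting `R`, `D`.
theorem sum_choose_shift_succ {R : Type*} [CommRing R] (s : R) (u h : ℕ → R) (n : ℕ) :
    ∑ k ∈ range (n + 1), (n.choose k : R) * (-1) ^ k * s ^ (n - k) *
        (s * (u k * h (n - k + 1)) - u (k + 1) * h (n - k)) =
      ∑ k ∈ range (n + 2), ((n + 1).choose k : R) * (-1) ^ k * s ^ (n + 1 - k) *
        (u k * h (n + 1 - k)) := by
  have hraise : ∑ k ∈ range (n + 1), (n.choose k : R) * (-1) ^ k * s ^ (n - k) *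
        (s * (u k * h (n - k + 1))) =
      ∑ k ∈ range (n + 1), (n.choose (k + 1) : R) * (-1) ^ (k + 1) * s ^ (n - k) *
        (u (k + 1) * h (n - k)) + s ^ (n + 1) * (u 0 * h (n + 1)) := by
    rw [sum_range_succ' _ n, sum_range_succ _ n, Nat.choose_succ_self]
    simp only [Nat.cast_zero, zero_mul, add_zero, Nat.choose_zero_right, Nat.sub_zero, pow_zero]
    congr 1
    · refine sum_congr rfl fun k hk => ?_
      rw [show n - k = n - (k + 1) + 1 by have := mem_range.1 hk; omega]
      ring
    · ring
  rw [sum_range_succ' _ (n + 1)]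
  simp only [mul_sub, sum_sub_distrib, hraise, Nat.choose_succ_succ', Nat.cast_add,
    Nat.add_sub_add_right, add_mul, sum_add_distrib, pow_succ, mul_neg, neg_mul, mul_one,
    sum_neg_distrib, Nat.choose_zero_right, Nat.sub_zero, pow_zero]
  ring

theorem sum_piFinset_snoc {α M : Type*} [AddCommMonoid M] {m : ℕ} (s : Fin (m + 1) → Finset α)
    (G : (Fin (m + 1) → α) → M) :
    ∑ K ∈ Fintype.piFinset s, G K =
      ∑ t ∈ s (Fin.last m), ∑ k ∈ Fintype.piFinset (fun i => s i.castSucc),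
        G (Fin.snoc k t) := by
  rw [← sum_product']
  refine (sum_nbij' (fun p => Fin.snoc p.2 p.1) (fun K => (K (Fin.last m), Fin.init K))
    ?_ ?_ ?_ ?_ ?_).symm <;> simp [Fin.forall_fin_succ', Fin.init, and_comm]

theorem sqrt_pow_eq_rpow {c : ℝ} (hc : 0 ≤ c) (n : ℕ) : √c ^ n = c ^ ((n : ℝ) / 2) := by
  rw [Real.sqrt_eq_rpow, ← Real.rpow_natCast, ← Real.rpow_mul hc]
  ring_nf

theorem sqrt_pow_sub_eq_rpow {c : ℝ} (hc : 0 < c) {r t : ℕ} (ht : t ≤ r) :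
    √c ^ (r - t) = c ^ ((r : ℝ) / 2) * c ^ (-(t : ℝ) / 2) := by
  rw [sqrt_pow_eq_rpow hc.le, ← Real.rpow_add hc, Nat.cast_sub ht]
  ring_nf

theorem hasDerivAt_comp_update {d j : ℕ} {F : (Fin d → ℝ) → ℝ} (hF : ContDiff ℝ ∞ F)
    (hj : j < d) (x : ℕ → ℝ) :
    HasDerivAt (fun t => F (fun i : Fin d => update x j t i))
      (fderiv ℝ F (fun i => x i) (Pi.single ⟨j, hj⟩ 1)) (x j) := by
  have hupdate (t : ℝ) :
      (fun i : Fin d => update x j t i) = update (fun i : Fin d => x i) ⟨j, hj⟩ t :=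
    update_comp_eq_of_injective x Fin.val_injective (⟨j, hj⟩ : Fin d) t
  simp_rw [hupdate]
  refine HasFDerivAt.comp_hasDerivAt (x j) ?_ (hasDerivAt_update _ _ _)
  rw [update_eq_self_iff.2 rfl]
  exact (hF.differentiable (by simp)).differentiableAt.hasFDerivAt

-- `ℕ → ℝ` carries no normed structure, so smoothness is expressed by factoring through the
-- first `d` coordinates.
def SmoothCylinder (d : ℕ) (P : (ℕ → ℝ) → ℝ) : Prop :=
  ∃ F : (Fin d → ℝ) → ℝ, ContDiff ℝ ∞ F ∧ ∀ x, P x = F (fun i => x i)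

namespace SmoothCylinder

variable {d : ℕ} {P Q : (ℕ → ℝ) → ℝ}

theorem const (c : ℝ) : SmoothCylinder d fun _ => c :=
  ⟨fun _ => c, contDiff_const, fun _ => rfl⟩

theorem coord {i : ℕ} (hi : i < d) : SmoothCylinder d fun x => x i :=
  ⟨fun v => v ⟨i, hi⟩, contDiff_apply ℝ ℝ _, fun _ => rfl⟩

theorem comp (hP : SmoothCylinder d P) {g : ℝ → ℝ} (hg : ContDiff ℝ ∞ g) :
    SmoothCylinder d fun x => g (P x) := by
  obtain ⟨F, hF, hPF⟩ := hP
  exact ⟨g ∘ F, hg.comp hF, fun x => by simp [hPF]⟩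

theorem add (hP : SmoothCylinder d P) (hQ : SmoothCylinder d Q) :
    SmoothCylinder d fun x => P x + Q x := by
  obtain ⟨F, hF, hPF⟩ := hP
  obtain ⟨G, hG, hQG⟩ := hQ
  exact ⟨F + G, hF.add hG, fun x => by simp [hPF, hQG]⟩

theorem mul (hP : SmoothCylinder d P) (hQ : SmoothCylinder d Q) :
    SmoothCylinder d fun x => P x * Q x := by
  obtain ⟨F, hF, hPF⟩ := hP
  obtain ⟨G, hG, hQG⟩ := hQ
  exact ⟨F * G, hF.mul hG, fun x => by simp [hPF, hQG]⟩

theorem sub (hP : SmoothCylinder d P) (hQ : SmoothCylinder d Q) :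
    SmoothCylinder d fun x => P x - Q x := by
  simpa [sub_eq_add_neg] using hP.add (hQ.comp (g := Neg.neg) contDiff_neg)

theorem sum {ι : Type*} {s : Finset ι} {f : ι → (ℕ → ℝ) → ℝ}
    (hf : ∀ i ∈ s, SmoothCylinder d (f i)) : SmoothCylinder d fun x => ∑ i ∈ s, f i x := by
  classical
  induction s using Finset.induction_on with
  | empty => simpa using const 0
  | insert i s hi ih =>
    simp_rw [sum_insert hi]
    exact (hf i (mem_insert_self i s)).add (ih fun j hj => hf j (mem_insert_of_mem hj))

theorem hasDerivAt_update (hP : SmoothCylinder d P) {j : ℕ} (hj : j < d) (x : ℕ → ℝ) :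
    HasDerivAt (fun t => P (update x j t)) (_root_.pd j P x) (x j) := by
  obtain ⟨F, hF, rfl⟩ : ∃ F, ContDiff ℝ ∞ F ∧ P = fun x => F (fun i : Fin d => x i) :=
    hP.imp fun F h => ⟨h.1, funext h.2⟩
  have h := hasDerivAt_comp_update hF hj x
  rwa [_root_.pd, h.deriv]

theorem differentiableAt_update (hP : SmoothCylinder d P) {j : ℕ} (hj : j < d) (x : ℕ → ℝ) :
    DifferentiableAt ℝ (fun t => P (update x j t)) (x j) :=
  (hP.hasDerivAt_update hj x).differentiableAt

theorem pd (hP : SmoothCylinder d P) {j : ℕ} (hj : j < d) : SmoothCylinder d (pd j P) := by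
  obtain ⟨F, hF, hPF⟩ := hP
  refine ⟨fun v => fderiv ℝ F v (Pi.single ⟨j, hj⟩ 1),
    (hF.fderiv_right (m := ∞) le_rfl).clm_apply contDiff_const, fun x => ?_⟩
  simp_rw [_root_.pd, hPF]
  exact (hasDerivAt_comp_update hF hj x).deriv

theorem iterate_pd (hP : SmoothCylinder d P) {j : ℕ} (hj : j < d) (k : ℕ) :
    SmoothCylinder d ((_root_.pd j)^[k] P) := by
  induction k with
  | zero => exact hP
  | succ k ih => rw [iterate_succ_apply']; exact ih.pd hj

end SmoothCylinder

section Linearity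

variable {d j : ℕ}

theorem pd_sum {ι : Type*} (s : Finset ι) (f : ι → (ℕ → ℝ) → ℝ) (x : ℕ → ℝ)
    (hf : ∀ i ∈ s, DifferentiableAt ℝ (fun t => f i (update x j t)) (x j)) :
    pd j (fun y => ∑ i ∈ s, f i y) x = ∑ i ∈ s, pd j (f i) x :=
  deriv_fun_sum hf

theorem pd_const_mul (c : ℝ) (f : (ℕ → ℝ) → ℝ) (x : ℕ → ℝ) :
    pd j (fun y => c * f y) x = c * pd j f x :=
  deriv_const_mul_field c

theorem creation_sum {ι : Type*} (s : Finset ι) (f : ι → (ℕ → ℝ) → ℝ)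
    (x : ℕ → ℝ) (hf : ∀ i ∈ s, DifferentiableAt ℝ (fun t => f i (update x j t)) (x j)) :
    creation j (fun y => ∑ i ∈ s, f i y) x = ∑ i ∈ s, creation j (f i) x := by
  simp only [creation, pd_sum s f x hf, mul_sum, ← sum_neg_distrib, ← sum_add_distrib]

theorem creation_const_mul (c : ℝ) (f : (ℕ → ℝ) → ℝ) (x : ℕ → ℝ) :
    creation j (fun y => c * f y) x = c * creation j f x := by
  simp only [creation, pd_const_mul]
  ring

theorem iterate_pd_const (c : ℝ) (k : ℕ) : (pd j)^[k + 1] (fun _ => c) = fun _ => 0 := by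
  induction k with
  | zero => funext x; simp [pd]
  | succ k ih => rw [iterate_succ_apply', ih]; funext x; simp [pd]

theorem iterate_pd_sum (hj : j < d) {ι : Type*} (s : Finset ι) {f : ι → (ℕ → ℝ) → ℝ}
    (hf : ∀ i ∈ s, SmoothCylinder d (f i)) (c : ι → ℝ) (n : ℕ) :
    (pd j)^[n] (fun y => ∑ i ∈ s, c i * f i y) =
      fun y => ∑ i ∈ s, c i * (pd j)^[n] (f i) y := by
  induction n generalizing f with
  | zero => rfl
  | succ n ih =>
    have hpd : pd j (fun y => ∑ i ∈ s, c i * f i y) =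
        fun y => ∑ i ∈ s, c i * pd j (f i) y := by
      funext x
      rw [pd_sum s _ x fun i hi =>
        ((SmoothCylinder.const _).mul (hf i hi)).differentiableAt_update hj x]
      simp only [pd_const_mul]
    rw [iterate_succ_apply, hpd, ih fun i hi => (hf i hi).pd hj]
    rfl

end Linearity

theorem ext_snoc_of_lt {m : ℕ} (k : Fin m → ℕ) (t : ℕ) {i : ℕ} (hi : i < m) :
    ext (m + 1 + 1) (Fin.snoc k t) i = ext (m + 1) k i := by
  rw [_root_.ext, _root_.ext, dif_pos (by omega), dif_pos (by omega)]
  exact Fin.snoc_castSucc (α := fun _ => ℕ) t k ⟨i, hi⟩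

theorem ext_snoc_self {m : ℕ} (k : Fin m → ℕ) (t : ℕ) :
    ext (m + 1 + 1) (Fin.snoc k t) m = t := by
  rw [_root_.ext, dif_pos (by omega)]
  exact Fin.snoc_last (α := fun _ => ℕ) t k

theorem prod_range_succ_ext_snoc {M : Type*} [CommMonoid M] (f : ℕ → ℕ → M) {m : ℕ}
    (k : Fin m → ℕ) (t : ℕ) :
    ∏ i ∈ range (m + 1), f i (ext (m + 1 + 1) (Fin.snoc k t) i) =
      (∏ i ∈ range m, f i (ext (m + 1) k i)) * f m t := by
  rw [prod_range_succ, ext_snoc_self,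
    prod_congr rfl fun i hi => by rw [ext_snoc_of_lt k t (mem_range.1 hi)]]

section Cylinders

variable {d : ℕ} (a : ℕ → ℕ → ℝ) (r : ℕ → ℕ)

theorem smoothCylinder_Sfun {i : ℕ} (hi : i < d) : SmoothCylinder d (Sfun d a i) := by
  have hsum : SmoothCylinder d fun x => ∑ j ∈ (range d).filter (· ≠ i), a i j * x j :=
    .sum fun j hj => (SmoothCylinder.const _).mul (.coord (mem_range.1 (mem_filter.1 hj).1))
  exact (((SmoothCylinder.const _).mul (.coord hi)).sub hsum).comp (contDiff_id.div_const _)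

theorem smoothCylinder_Hpoly_Sfun (n : ℕ) {i : ℕ} (hi : i < d) :
    SmoothCylinder d fun x => Hpoly n (Sfun d a i x) :=
  (smoothCylinder_Sfun a hi).comp (contDiff_Hpoly n)

theorem smoothCylinder_exp_neg_Qform : SmoothCylinder d fun x => Real.exp (-Qform d a x) := by
  refine (SmoothCylinder.sum fun i hi => .sum fun j hj => ?_).comp (g := fun q => Real.exp (-q))
    (by fun_prop)
  exact ((SmoothCylinder.coord (mem_range.1 hi)).mul (.const _)).mul (.coord (mem_range.1 hj))

theorem smoothCylinder_Pnest (k : ℕ → ℕ) {m : ℕ} (hm : m < d) :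
    SmoothCylinder d (Pnest d a r k m) := by
  induction m with
  | zero => exact smoothCylinder_Hpoly_Sfun a _ hm
  | succ m ih =>
    exact (smoothCylinder_Hpoly_Sfun a _ hm).mul ((ih (by omega)).iterate_pd hm _)

theorem Pnest_congr {k k' : ℕ → ℕ} {m : ℕ} (h : ∀ i < m, k i = k' i) :
    Pnest d a r k m = Pnest d a r k' m := by
  induction m with
  | zero => rfl
  | succ m ih =>
    simp only [Pnest, ih fun i hi => h i (by omega), h m (by omega)]

theorem Pnest_succ_ext_snoc {m : ℕ} (k : Fin m → ℕ) (t : ℕ) (x : ℕ → ℝ) :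
    Pnest d a r (ext (m + 1 + 1) (Fin.snoc k t)) (m + 1) x =
      Hpoly (r (m + 1) - t) (Sfun d a (m + 1) x) *
        (pd (m + 1))^[t] (Pnest d a r (ext (m + 1) k) m) x := by
  rw [Pnest, ext_snoc_self, Pnest_congr a r fun i hi => ext_snoc_of_lt k t hi]

end Cylinders

theorem hasDerivAt_Sfun_update (d : ℕ) (a : ℕ → ℕ → ℝ) (j : ℕ) (x : ℕ → ℝ) :
    HasDerivAt (fun t => Sfun d a j (update x j t)) √(1 + a j j) (x j) := by
  have h : (fun t => Sfun d a j (update x j t)) = fun t =>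
      ((1 + a j j) * t - ∑ m ∈ (range d).filter (· ≠ j), a j m * x m) / √(1 + a j j) := by
    funext t
    simp only [Sfun, update_self]
    congr 2
    exact sum_congr rfl fun m hm => by rw [update_of_ne (mem_filter.1 hm).2]
  rw [h]
  simpa [Real.div_sqrt] using
    (((hasDerivAt_id (x j)).const_mul (1 + a j j)).sub_const _).div_const √(1 + a j j)

section Derivatives

variable {d : ℕ} {a : ℕ → ℕ → ℝ} {j : ℕ}

theorem hasDerivAt_quadratic_update {C : ℕ → ℕ → ℝ} (hC : ∀ i < d, C i j = C j i)
    (hj : j < d) (x : ℕ → ℝ) :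
    HasDerivAt
      (fun t => ∑ i ∈ range d, ∑ m ∈ range d, update x j t i * C i m * update x j t m)
      (2 * ∑ m ∈ range d, C j m * x m) (x j) := by
  have hu (i : ℕ) : HasDerivAt (fun t => update x j t i) (if i = j then 1 else 0) (x j) := by
    rcases eq_or_ne i j with rfl | h
    · simpa using hasDerivAt_id' (x i)
    · simpa [h] using hasDerivAt_const (x j) (x i)
  refine (HasDerivAt.fun_sum fun i _ => HasDerivAt.fun_sum fun m _ =>
    ((hu i).mul_const _).fun_mul (hu m)).congr_deriv ?_
  have hsymm : ∑ i ∈ range d, x i * C i j = ∑ i ∈ range d, C j i * x i :=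
    sum_congr rfl fun i hi => by rw [hC i (mem_range.1 hi), mul_comm]
  simp [sum_add_distrib, ite_mul, mul_ite, hj, hsymm, two_mul]

theorem sum_Qform_row_eq (hc : 0 < 1 + a j j) (hj : j < d) (x : ℕ → ℝ) :
    ∑ m ∈ range d, (if j = m then a j j else -a j m) * x m =
      √(1 + a j j) * Sfun d a j x - x j := by
  have hsqrt : √(1 + a j j) ≠ 0 := (Real.sqrt_pos.2 hc).ne'
  rw [Sfun, mul_div_cancel₀ _ hsqrt, filter_ne', ← add_sum_erase _ _ (mem_range.2 hj),
    if_pos rfl, sum_congr rfl fun m hm => by rw [if_neg (ne_of_mem_erase hm).symm, neg_mul],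
    sum_neg_distrib]
  ring

theorem hasDerivAt_exp_neg_Qform_update (hsymm : ∀ i < d, a i j = a j i) (hc : 0 < 1 + a j j)
    (hj : j < d) (x : ℕ → ℝ) :
    HasDerivAt (fun t => Real.exp (-Qform d a (update x j t)))
      (2 * (x j - √(1 + a j j) * Sfun d a j x) * Real.exp (-Qform d a x)) (x j) := by
  have hC : ∀ i < d, (if i = j then a i i else -a i j) = if j = i then a j j else -a j i := by
    intro i hi
    rcases eq_or_ne i j with rfl | h
    · rfl
    · simp [h, h.symm, hsymm i hi]
  have hQ := hasDerivAt_quadratic_update (C := fun i m => if i = m then a i i else -a i m) hC hj x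
  rw [sum_Qform_row_eq hc hj] at hQ
  refine hQ.fun_neg.exp.congr_deriv ?_
  simp only [Qform, update_eq_self]
  ring

-- The `2 x_j` terms of `A_j*` and of `∂_j g` cancel; what remains is the Hermite recursion.
theorem creation_mul_Hpoly_Sfun_exp_neg_Qform (hsymm : ∀ i < d, a i j = a j i)
    (hc : 0 < 1 + a j j) (hj : j < d) {P : (ℕ → ℝ) → ℝ} {x : ℕ → ℝ}
    (hP : DifferentiableAt ℝ (fun t => P (update x j t)) (x j)) (n : ℕ) :
    creation j (fun y => P y * (Hpoly n (Sfun d a j y) * Real.exp (-Qform d a y))) x =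
      √(1 + a j j) * (P x * (Hpoly (n + 1) (Sfun d a j x) * Real.exp (-Qform d a x))) -
        pd j P x * (Hpoly n (Sfun d a j x) * Real.exp (-Qform d a x)) := by
  have hH := (hasDerivAt_Hpoly n _).comp_of_eq (x j) (hasDerivAt_Sfun_update d a j x)
    (by rw [update_eq_self])
  rw [comp_def] at hH
  have h := hP.hasDerivAt.fun_mul (hH.fun_mul (hasDerivAt_exp_neg_Qform_update hsymm hc hj x))
  simp only [creation, pd]
  rw [h.deriv]
  simp only [update_eq_self]
  ring

theorem iterate_creation_mul_exp_neg_Qform (hsymm : ∀ i < d, a i j = a j i) (hc : 0 < 1 + a j j)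
    (hj : j < d) {P : (ℕ → ℝ) → ℝ} (hP : SmoothCylinder d P) (n : ℕ) :
    (creation j)^[n] (fun y => P y * Real.exp (-Qform d a y)) = fun y =>
      ∑ k ∈ range (n + 1), (n.choose k : ℝ) * (-1) ^ k * √(1 + a j j) ^ (n - k) *
        ((pd j)^[k] P y * (Hpoly (n - k) (Sfun d a j y) * Real.exp (-Qform d a y))) := by
  induction n with
  | zero => simp [Hpoly_zero]
  | succ n ih =>
    funext x
    have hterm (k : ℕ) : SmoothCylinder d fun y =>
        (n.choose k : ℝ) * (-1) ^ k * √(1 + a j j) ^ (n - k) *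
          ((pd j)^[k] P y * (Hpoly (n - k) (Sfun d a j y) * Real.exp (-Qform d a y))) :=
      (SmoothCylinder.const _).mul ((hP.iterate_pd hj k).mul
        ((smoothCylinder_Hpoly_Sfun a _ hj).mul (smoothCylinder_exp_neg_Qform a)))
    rw [iterate_succ_apply', ih,
      creation_sum _ _ x fun k _ => (hterm k).differentiableAt_update hj x]
    simp only [creation_const_mul, creation_mul_Hpoly_Sfun_exp_neg_Qform hsymm hc hj
      ((hP.iterate_pd hj _).differentiableAt_update hj x), ← iterate_succ_apply' (pd j)]
    exact sum_choose_shift_succ _ (fun k => (pd j)^[k] P x)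
      (fun m => Hpoly m (Sfun d a j x) * Real.exp (-Qform d a x)) n

theorem creationChain_one_exp_neg_Qform (hsymm : ∀ i < d, a i 0 = a 0 i) (hc : 0 < 1 + a 0 0)
    (r : ℕ → ℕ) (hd : 0 < d) :
    creationChain r 1 (fun y => Real.exp (-Qform d a y)) = fun x =>
      (1 + a 0 0) ^ ((r 0 : ℝ) / 2) * Hpoly (r 0) (Sfun d a 0 x) * Real.exp (-Qform d a x) := by
  have h := iterate_creation_mul_exp_neg_Qform hsymm hc hd (SmoothCylinder.const 1) (r 0)
  simp only [one_mul] at h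
  rw [creationChain, creationChain, h]
  funext x
  rw [sum_range_succ']
  simp [iterate_pd_const, sqrt_pow_eq_rpow hc.le, mul_assoc]

theorem creationChain_exp_neg_Qform (hsymm : ∀ i < d, ∀ j < d, a i j = a j i)
    (hpos : ∀ i < d, 0 < a i i) (r : ℕ → ℕ) {m : ℕ} (hm : m < d) :
    creationChain r (m + 1) (fun y => Real.exp (-Qform d a y)) = fun x =>
      (∏ i ∈ range (m + 1), (1 + a i i) ^ ((r i : ℝ) / 2)) *
        ∑ k ∈ Fintype.piFinset (fun i : Fin m => range (r (i.1 + 1) + 1)),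
          (∏ i ∈ range m, (-1 : ℝ) ^ ext (m + 1) k i *
              (1 + a (i + 1) (i + 1)) ^ (-(ext (m + 1) k i : ℝ) / 2) *
              ((r (i + 1)).choose (ext (m + 1) k i) : ℝ)) *
            Pnest d a r (ext (m + 1) k) m x * Real.exp (-Qform d a x) := by
  induction m with
  | zero =>
    rw [creationChain_one_exp_neg_Qform (fun i hi => hsymm i hi 0 hm) (by linarith [hpos 0 hm])
      r hm]
    funext x
    simp [Pnest, mul_assoc]
  | succ m ih =>
    have hc : 0 < 1 + a (m + 1) (m + 1) := by linarith [hpos (m + 1) hm]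
    set w : (Fin m → ℕ) → ℝ := fun k =>
      (∏ i ∈ range (m + 1), (1 + a i i) ^ ((r i : ℝ) / 2)) *
        ∏ i ∈ range m, (-1 : ℝ) ^ ext (m + 1) k i *
          (1 + a (i + 1) (i + 1)) ^ (-(ext (m + 1) k i : ℝ) / 2) *
          ((r (i + 1)).choose (ext (m + 1) k i) : ℝ) with hw
    have hPnest : ∀ k ∈ Fintype.piFinset (fun i : Fin m => range (r (i.1 + 1) + 1)),
        SmoothCylinder d (Pnest d a r (ext (m + 1) k) m) :=
      fun k _ => smoothCylinder_Pnest a r _ (by omega)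
    have hprev : creationChain r (m + 1) (fun y => Real.exp (-Qform d a y)) = fun y =>
        (∑ k ∈ Fintype.piFinset (fun i : Fin m => range (r (i.1 + 1) + 1)),
          w k * Pnest d a r (ext (m + 1) k) m y) * Real.exp (-Qform d a y) := by
      rw [ih (by omega)]
      funext y
      simp only [mul_sum, sum_mul, hw, mul_assoc]
    rw [creationChain, hprev, iterate_creation_mul_exp_neg_Qform (fun i hi => hsymm i hi _ hm) hc
      hm (.sum fun k hk => (SmoothCylinder.const _).mul (hPnest k hk))]
    simp only [iterate_pd_sum hm _ hPnest]
    funext x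
    rw [sum_piFinset_snoc, prod_range_succ, mul_sum]
    refine sum_congr rfl fun t ht => ?_
    rw [sum_mul, mul_sum, mul_sum]
    refine sum_congr rfl fun k _ => ?_
    have ht' : t ≤ r (m + 1) := Nat.lt_succ_iff.1 (mem_range.1 ht)
    rw [prod_range_succ_ext_snoc (fun i e => (-1 : ℝ) ^ e *
        (1 + a (i + 1) (i + 1)) ^ (-(e : ℝ) / 2) * ((r (i + 1)).choose e : ℝ)),
      Pnest_succ_ext_snoc, sqrt_pow_sub_eq_rpow hc ht', hw]
    ring

end Derivatives

end

theorem stmt0 (d : ℕ) (hd : 2 ≤ d) (a : ℕ → ℕ → ℝ)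
    (hpos : ∀ i < d, 0 < a i i)
    (hsymm : ∀ i < d, ∀ j < d, a i j = a j i)
    (r : ℕ → ℕ) (x : ℕ → ℝ) :
    creationChain r d (fun y => Real.exp (-(Qform d a y))) x
      = (∏ i ∈ Finset.range d, (1 + a i i) ^ ((r i : ℝ)/2)) *
        ∑ k ∈ Fintype.piFinset (fun i : Fin (d - 1) => Finset.range (r (i.1 + 1) + 1)),
          (∏ i ∈ Finset.range (d - 1),
              (-1 : ℝ) ^ (ext d k i) *
                (1 + a (i + 1) (i + 1)) ^ (-(ext d k i : ℝ)/2) *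
                ((r (i + 1)).choose (ext d k i) : ℝ)) *
            Pnest d a r (ext d k) (d - 1) x * Real.exp (-(Qform d a x)) := by
  obtain ⟨m, rfl⟩ : ∃ m, d = m + 1 := ⟨d - 1, by omega⟩
  exact congrFun (creationChain_exp_neg_Qform hsymm hpos r (Nat.lt_succ_self m)) x
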